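/- arXiv:1302.3211 — 5 statements merged into one kernel-verified Lean document; each statement's English description precedes it below -/
import Mathlib

section
/- Let K be a compact Hausdorff space. Suppose (μ_i)_{i∈I} is a family of regular finite signed Borel measures on K indexed by a set I carrying a filter l, and μ is a regular finite signed Borel measure on K, such that ∫_K g dμ_i → ∫_K g dμ along l for every continuous g : K → ℝ. Then for every open set U ⊆ K one has |μ|(U) ≤ liminf_{l} |μ_i|(U). (Equivalently: on the space of regular finite signed Borel measures on K with the weak* topology, the map μ ↦ |μ|(U) is lower semicontinuous for every open U ⊆ K.) -/
/-!
Take a Hahn decomposition for `μ` and, by inner regularity of `|μ|`, compact sets `A` and `B`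
inside `U` on its positive and negative side carrying almost all of `μ⁺(U)` and `μ⁻(U)`.
A Urysohn function `g` equal to `1` on `A`, `-1` on `B`, vanishing off `U` and with `|g| ≤ 1`
then has `∫ g dμ` within `ε` of `|μ|(U)`, while `∫ g dμᵢ ≤ |μᵢ|(U)` for every `i`.
-/

open MeasureTheory Filter Set
open scoped ENNReal

/-- Integral of a real function against a signed measure, via the Jordan decomposition. -/
noncomputable def sInteg {X : Type*} [MeasurableSpace X] (μ : SignedMeasure X) (g : X → ℝ) : ℝ :=
  ∫ x, g x ∂μ.toJordanDecomposition.posPart - ∫ x, g x ∂μ.toJordanDecomposition.negPart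

section BoundedIntegrand

variable {X : Type*} [MeasurableSpace X] {ρ : Measure X} [IsFiniteMeasure ρ] {g : X → ℝ}
  {A U : Set X}

lemma Measurable.integrable_of_abs_le_one (hg : Measurable g) (hg1 : ∀ x, |g x| ≤ 1) :
    Integrable g ρ :=
  .of_bound hg.aestronglyMeasurable 1 (.of_forall hg1)

lemma integral_le_measureReal_of_abs_le_one (hg : Measurable g) (hU : MeasurableSet U)
    (hg1 : ∀ x, |g x| ≤ 1) (hgU : ∀ x ∉ U, g x = 0) :
    ∫ x, g x ∂ρ ≤ ρ.real U := by
  rw [← integral_indicator_one hU]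
  refine integral_mono (hg.integrable_of_abs_le_one hg1)
    ((integrable_const 1).indicator hU) fun x => ?_
  by_cases hx : x ∈ U
  · simpa [hx] using (abs_le.1 (hg1 x)).2
  · simp [hx, hgU x hx]

lemma measureReal_sub_measureReal_sdiff_le_integral (hg : Measurable g) (hA : MeasurableSet A)
    (hU : MeasurableSet U) (hg1 : ∀ x, |g x| ≤ 1) (hgA : EqOn g 1 A)
    (hgU : ∀ x ∉ U, g x = 0) :
    ρ.real A - ρ.real (U \ A) ≤ ∫ x, g x ∂ρ := by
  have h1A : Integrable (A.indicator (1 : X → ℝ)) ρ := (integrable_const 1).indicator hA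
  have h1UA : Integrable ((U \ A).indicator (1 : X → ℝ)) ρ :=
    (integrable_const 1).indicator (hU.diff hA)
  rw [← integral_indicator_one hA, ← integral_indicator_one (hU.diff hA),
    ← integral_sub h1A h1UA]
  refine integral_mono (h1A.sub h1UA) (hg.integrable_of_abs_le_one hg1) fun x => ?_
  by_cases hxA : x ∈ A
  · simp [hxA, hgA hxA]
  by_cases hxU : x ∈ U
  · simpa [hxA, hxU] using (abs_le.1 (hg1 x)).1
  · simp [hxA, hxU, hgU x hxU]

end BoundedIntegrand

lemma exists_isCompact_subset_inter_measure_sdiff_lt {X : Type*} [TopologicalSpace X]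
    [T2Space X] [MeasurableSpace X] [OpensMeasurableSpace X] {ρ ν : Measure X}
    [ν.InnerRegularCompactLTTop] (hρν : ρ ≤ ν) {T U : Set X} (hT : MeasurableSet T)
    (hU : MeasurableSet U) (hνU : ν U ≠ ∞) (hρT : ρ Tᶜ = 0) {δ : ℝ≥0∞}
    (hδ : δ ≠ 0) :
    ∃ A ⊆ U ∩ T, IsCompact A ∧ ρ (U \ A) < δ := by
  obtain ⟨A, hAUT, hA, hνA⟩ :=
    (hU.inter hT).exists_isCompact_sdiff_lt (measure_ne_top_of_subset inter_subset_left hνU) hδ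
  refine ⟨A, hAUT, hA, ?_⟩
  calc ρ (U \ A) = ρ ((U ∩ T) \ A) := by rw [inter_sdiff_right_comm, measure_inter_conull hρT]
    _ ≤ ν ((U ∩ T) \ A) := hρν _
    _ < δ := hνA

lemma exists_continuous_eqOn_one_eqOn_neg_one {X : Type*} [TopologicalSpace X] [NormalSpace X]
    {A B U : Set X} (hA : IsClosed A) (hB : IsClosed B) (hU : IsOpen U) (hAB : Disjoint A B)
    (hAU : A ⊆ U) (hBU : B ⊆ U) :
    ∃ g : C(X, ℝ), EqOn g 1 A ∧ EqOn g (-1) B ∧ (∀ x ∉ U, g x = 0) ∧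
      ∀ x, |g x| ≤ 1 := by
  obtain ⟨f, hf0, hf1, hf01⟩ := exists_continuous_zero_one_of_isClosed
    (hB.union hU.isClosed_compl) hA
    (disjoint_union_left.2 ⟨hAB.symm, disjoint_compl_left_iff_subset.2 hAU⟩)
  obtain ⟨h, hh0, hh1, hh01⟩ := exists_continuous_zero_one_of_isClosed
    (hA.union hU.isClosed_compl) hB
    (disjoint_union_left.2 ⟨hAB, disjoint_compl_left_iff_subset.2 hBU⟩)
  refine ⟨f - h, fun x hx => ?_, fun x hx => ?_, fun x hx => ?_, fun x => ?_⟩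
  · simp [hf1 hx, hh0 (mem_union_left _ hx)]
  · simp [hf0 (mem_union_left _ hx), hh1 hx]
  · simp [hf0 (mem_union_right _ hx), hh0 (mem_union_right _ hx)]
  · obtain ⟨hf0x, hf1x⟩ := hf01 x
    obtain ⟨hh0x, hh1x⟩ := hh01 x
    simp only [ContinuousMap.sub_apply, abs_le]
    constructor <;> linarith

namespace MeasureTheory.SignedMeasure

variable {X : Type*} [MeasurableSpace X]

lemma totalVariation_real_apply (ν : SignedMeasure X) (s : Set X) :
    ν.totalVariation.real s =
      ν.toJordanDecomposition.posPart.real s + ν.toJordanDecomposition.negPart.real s :=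
  measureReal_add_apply

lemma sInteg_le_totalVariation_real (ν : SignedMeasure X) {g : X → ℝ} {U : Set X}
    (hg : Measurable g) (hU : MeasurableSet U) (hg1 : ∀ x, |g x| ≤ 1)
    (hgU : ∀ x ∉ U, g x = 0) :
    sInteg ν g ≤ ν.totalVariation.real U := by
  have hpos := integral_le_measureReal_of_abs_le_one
    (ρ := ν.toJordanDecomposition.posPart) hg hU hg1 hgU
  have hneg := integral_le_measureReal_of_abs_le_one
    (ρ := ν.toJordanDecomposition.negPart) hg.neg hU (by simpa using hg1) (by simpa using hgU)
  simp only [Pi.neg_apply, integral_neg] at hneg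
  rw [sInteg, totalVariation_real_apply]
  linarith

lemma exists_continuous_totalVariation_real_lt_sInteg_add [TopologicalSpace X] [NormalSpace X]
    [T2Space X] [OpensMeasurableSpace X] (μ : SignedMeasure X)
    [μ.totalVariation.InnerRegularCompactLTTop] {U : Set X} (hU : IsOpen U) {ε : ℝ}
    (hε : 0 < ε) :
    ∃ g : C(X, ℝ), (∀ x, |g x| ≤ 1) ∧ (∀ x ∉ U, g x = 0) ∧
      μ.totalVariation.real U < sInteg μ g + ε := by
  obtain ⟨S, hS, hpS, hnS⟩ := μ.toJordanDecomposition.mutuallySingular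
  set p := μ.toJordanDecomposition.posPart
  set n := μ.toJordanDecomposition.negPart
  have hδ : ENNReal.ofReal (ε / 4) ≠ 0 := by simp [hε]
  obtain ⟨A, hAUS, hA, hpA⟩ := exists_isCompact_subset_inter_measure_sdiff_lt
    (ν := μ.totalVariation) (Measure.le_add_right le_rfl) hS.compl hU.measurableSet
    (measure_ne_top _ _) (by rwa [compl_compl]) hδ
  obtain ⟨B, hBUS, hB, hnB⟩ := exists_isCompact_subset_inter_measure_sdiff_lt
    (ν := μ.totalVariation) (Measure.le_add_left le_rfl) hS hU.measurableSet
    (measure_ne_top _ _) hnS hδ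
  have hAB : Disjoint A B := disjoint_compl_left.mono
    (hAUS.trans inter_subset_right) (hBUS.trans inter_subset_right)
  obtain ⟨g, hgA, hgB, hgU, hg1⟩ := exists_continuous_eqOn_one_eqOn_neg_one hA.isClosed
    hB.isClosed hU hAB (hAUS.trans inter_subset_left) (hBUS.trans inter_subset_left)
  refine ⟨g, hg1, hgU, ?_⟩
  have hpos := measureReal_sub_measureReal_sdiff_le_integral (ρ := p) g.continuous.measurable
    hA.measurableSet hU.measurableSet hg1 hgA hgU
  have hneg := measureReal_sub_measureReal_sdiff_le_integral (ρ := n) g.continuous.measurable.neg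
    hB.measurableSet hU.measurableSet (by simpa using hg1) (fun x hx => by simp [hgB hx])
    (by simpa using hgU)
  simp only [Pi.neg_apply, integral_neg] at hneg
  have hpU := measureReal_sdiff (μ := p) (hAUS.trans inter_subset_left) hA.measurableSet
  have hnU := measureReal_sdiff (μ := n) (hBUS.trans inter_subset_left) hB.measurableSet
  have hpA' : p.real (U \ A) < ε / 4 := ENNReal.toReal_lt_of_lt_ofReal hpA
  have hnB' : n.real (U \ B) < ε / 4 := ENNReal.toReal_lt_of_lt_ofReal hnB
  rw [totalVariation_real_apply, sInteg]
  linarith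

end MeasureTheory.SignedMeasure

theorem stmt1_general {K : Type*} [TopologicalSpace K] [CompactSpace K] [T2Space K]
    [MeasurableSpace K] [BorelSpace K]
    {I : Type*} (l : Filter I)
    (μs : I → SignedMeasure K) (μ : SignedMeasure K)
    (hreg : μ.totalVariation.Regular)
    (hconv : ∀ g : C(K, ℝ), Tendsto (fun i => sInteg (μs i) g) l (nhds (sInteg μ g)))
    (U : Set K) (hU : IsOpen U) :
    μ.totalVariation U ≤ liminf (fun i => (μs i).totalVariation U) l := by
  refine ENNReal.le_of_forall_pos_le_add fun ε hε _ => ?_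
  obtain ⟨g, hg1, hgU, hμg⟩ := μ.exists_continuous_totalVariation_real_lt_sInteg_add hU hε
  have hμsg i : ENNReal.ofReal (sInteg (μs i) g) ≤ (μs i).totalVariation U :=
    ENNReal.ofReal_le_of_le_toReal <| (μs i).sInteg_le_totalVariation_real
      g.continuous.measurable hU.measurableSet hg1 hgU
  have hlim : ENNReal.ofReal (sInteg μ g) ≤ liminf (fun i => (μs i).totalVariation U) l :=
    (le_liminf_iff).2 fun y hy => ((ENNReal.tendsto_ofReal (hconv g)).eventually
      (lt_mem_nhds hy)).mono fun i hi => hi.trans_le (hμsg i)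
  calc μ.totalVariation U = ENNReal.ofReal (μ.totalVariation.real U) :=
        (ENNReal.ofReal_toReal (measure_ne_top _ _)).symm
    _ ≤ ENNReal.ofReal (sInteg μ g + ε) := ENNReal.ofReal_le_ofReal hμg.le
    _ ≤ ENNReal.ofReal (sInteg μ g) + ε := by
        rw [← ENNReal.ofReal_coe_nnreal]; exact ENNReal.ofReal_add_le
    _ ≤ liminf (fun i => (μs i).totalVariation U) l + ε := by gcongr

/-- If ∫ g dμᵢ → ∫ g dμ along `l` for every continuous `g`, then for every open `U`
we have `|μ|(U) ≤ liminf |μᵢ|(U)`. -/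
theorem stmt1 {K : Type*} [TopologicalSpace K] [CompactSpace K] [T2Space K]
    [MeasurableSpace K] [BorelSpace K]
    {I : Type*} (l : Filter I) [l.NeBot]
    (μs : I → SignedMeasure K) (μ : SignedMeasure K)
    (hregs : ∀ i, (μs i).totalVariation.Regular) (hreg : μ.totalVariation.Regular)
    (hconv : ∀ g : C(K, ℝ), Tendsto (fun i => sInteg (μs i) g) l (nhds (sInteg μ g)))
    (U : Set K) (hU : IsOpen U) :
    μ.totalVariation U ≤ liminf (fun i => (μs i).totalVariation U) l :=
  stmt1_general l μs μ hreg hconv U hU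
end

section
/- Let K and L be compact Hausdorff spaces, let m > 0, and let T : C(K) → C(L) be a linear map with m·‖g‖ ≤ ‖Tg‖ ≤ ‖g‖ for all g ∈ C(K). Let (ν_y)_{y∈L} be a family of regular finite signed Borel measures on K representing T*. Fix x ∈ K and let μ be a regular finite signed Borel measure on L such that ∫_L (Tg) dμ = g(x) for all g ∈ C(K) and ‖μ‖ = sup{∫_L (Tg) dμ : g ∈ C(K), ‖Tg‖ ≤ 1} (that is, μ is a norm-preserving Hahn–Banach extension of the functional Tg ↦ g(x) defined on T[C(K)]). Then |μ|({y ∈ L : ‖ν_y‖ < m}) = 0; in other words, ‖ν_y‖ ≥ m for μ-almost all y ∈ L. -/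
open MeasureTheory

/-- The total-variation norm of a signed measure. -/
noncomputable def vnorm {X : Type*} [MeasurableSpace X] (μ : SignedMeasure X) : ℝ :=
  (μ.totalVariation Set.univ).toReal

/-!
If `|μ|(A) > 0` where `A = {y | ‖ν_y‖ ≤ m - ε}`, then every `g` with `‖Tg‖ ≤ 1` has `‖g‖ ≤ 1/m`,
so `|Tg(y)| = |∫ g dν_y| ≤ 1 - ε/m` on `A` while `|Tg| ≤ 1` everywhere. Hence
`∫ Tg dμ ≤ ∫ |Tg| d|μ| ≤ ‖μ‖ - (ε/m)|μ|(A)` uniformly in `g`, and the supremum of these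
integrals stays below `‖μ‖`, contradicting the norm-preserving property of `μ`.
-/

section SignedMeasure

variable {X : Type*} [MeasurableSpace X]

lemma vnorm_nonneg (ν : SignedMeasure X) : 0 ≤ vnorm ν :=
  ENNReal.toReal_nonneg

lemma vnorm_eq_measureReal_univ (ν : SignedMeasure X) :
    vnorm ν = ν.totalVariation.real Set.univ :=
  rfl

lemma abs_sInteg_le {ν : SignedMeasure X} {g : X → ℝ} {C : ℝ} (hC : ∀ z, |g z| ≤ C) :
    |sInteg ν g| ≤ C * vnorm ν := by
  set p := ν.toJordanDecomposition.posPart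
  set n := ν.toJordanDecomposition.negPart
  have hbound : ∀ π : Measure X, IsFiniteMeasure π → |∫ z, g z ∂π| ≤ C * π.real Set.univ :=
    fun π _ => by
      simpa only [Real.norm_eq_abs] using norm_integral_le_of_norm_le_const (μ := π)
        (Filter.Eventually.of_forall fun z => (Real.norm_eq_abs (g z)).trans_le (hC z))
  have hvnorm : vnorm ν = p.real Set.univ + n.real Set.univ := by
    rw [vnorm_eq_measureReal_univ, SignedMeasure.totalVariation, measureReal_add_apply]
  calc |sInteg ν g| ≤ |∫ z, g z ∂p| + |∫ z, g z ∂n| := abs_sub _ _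
    _ ≤ C * p.real Set.univ + C * n.real Set.univ :=
        add_le_add (hbound p inferInstance) (hbound n inferInstance)
    _ = C * vnorm ν := by rw [hvnorm, mul_add]

lemma sInteg_le_integral_abs {ν : SignedMeasure X} {g : X → ℝ}
    (hg : Integrable g ν.totalVariation) : sInteg ν g ≤ ∫ z, |g z| ∂ν.totalVariation := by
  obtain ⟨hp, hn⟩ := integrable_add_measure.mp hg
  rw [SignedMeasure.totalVariation, integral_add_measure hp.abs hn.abs, sInteg]
  have hpos : ∫ z, g z ∂ν.toJordanDecomposition.posPart ≤
      ∫ z, |g z| ∂ν.toJordanDecomposition.posPart :=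
    integral_mono hp hp.abs fun z => le_abs_self _
  have hneg : -∫ z, |g z| ∂ν.toJordanDecomposition.negPart ≤
      ∫ z, g z ∂ν.toJordanDecomposition.negPart := by
    rw [← integral_neg]
    exact integral_mono hn.abs.neg hn fun z => neg_abs_le _
  linarith

end SignedMeasure

lemma integral_abs_le_measureReal_sub {X : Type*} [MeasurableSpace X] {π : Measure X}
    [IsFiniteMeasure π] {f : X → ℝ} (hf : Measurable f) {A : Set X} {δ : ℝ} (hδ : 0 ≤ δ)
    (hf_le : ∀ y, |f y| ≤ 1) (hA : ∀ y ∈ A, |f y| ≤ 1 - δ) :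
    ∫ y, |f y| ∂π ≤ π.real Set.univ - δ * π.real A := by
  set C := {y | |f y| ≤ 1 - δ}
  have hC : MeasurableSet C := measurableSet_le hf.abs measurable_const
  have hind : Integrable (C.indicator (1 : X → ℝ)) π := (integrable_const 1).indicator hC
  have hpointwise : ∀ y, |f y| ≤ 1 - δ * C.indicator 1 y := by
    intro y
    by_cases hy : y ∈ C
    · rw [Set.indicator_of_mem hy, Pi.one_apply, mul_one]
      exact hy
    · rw [Set.indicator_of_notMem hy, mul_zero, sub_zero]
      exact hf_le y
  calc ∫ y, |f y| ∂π ≤ ∫ y, (1 - δ * C.indicator 1 y) ∂π :=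
        integral_mono (Integrable.of_bound hf.abs.aestronglyMeasurable 1
          (Filter.Eventually.of_forall fun y => by simpa using hf_le y))
          ((integrable_const 1).sub (hind.const_mul δ)) hpointwise
    _ = π.real Set.univ - δ * π.real C := by
        rw [integral_sub (integrable_const 1) (hind.const_mul δ), integral_const_mul,
          integral_indicator_one hC, integral_const, smul_eq_mul, mul_one]
    _ ≤ π.real Set.univ - δ * π.real A := by
        gcongr
        exacts [measure_ne_top π C, hA]

lemma sInteg_le_vnorm_sub {Y : Type*} [TopologicalSpace Y] [CompactSpace Y] [MeasurableSpace Y]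
    [OpensMeasurableSpace Y] (μ : SignedMeasure Y) {f : C(Y, ℝ)} (hf : ‖f‖ ≤ 1) {A : Set Y}
    {δ : ℝ} (hδ : 0 ≤ δ) (hA : ∀ y ∈ A, |f y| ≤ 1 - δ) :
    sInteg μ f ≤ vnorm μ - δ * μ.totalVariation.real A := by
  have hf_le : ∀ y, |f y| ≤ 1 := fun y => (f.norm_coe_le_norm y).trans hf
  calc sInteg μ f ≤ ∫ y, |f y| ∂μ.totalVariation :=
        sInteg_le_integral_abs (Integrable.of_bound f.continuous.aestronglyMeasurable 1
          (Filter.Eventually.of_forall hf_le))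
    _ ≤ vnorm μ - δ * μ.totalVariation.real A :=
        integral_abs_le_measureReal_sub f.continuous.measurable hδ hf_le hA

lemma measure_setOf_lt_eq_zero {X : Type*} [MeasurableSpace X] {π : Measure X} {f : X → ℝ}
    {m : ℝ} (h : ∀ ε > 0, π {y | f y ≤ m - ε} = 0) : π {y | f y < m} = 0 := by
  have hsub : {y | f y < m} ⊆ ⋃ n : ℕ, {y | f y ≤ m - 1 / (n + 1)} := by
    intro y hy
    obtain ⟨n, hn⟩ := exists_nat_one_div_lt (sub_pos.mpr hy : 0 < m - f y)
    exact Set.mem_iUnion.mpr ⟨n, by simp only [Set.mem_ofPred_eq]; linarith⟩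
  exact measure_mono_null hsub (measure_iUnion_null fun n => h _ Nat.one_div_pos_of_nat)

lemma totalVariation_setOf_vnorm_le_sub_eq_zero {K L : Type*}
    [TopologicalSpace K] [CompactSpace K] [MeasurableSpace K]
    [TopologicalSpace L] [CompactSpace L] [MeasurableSpace L] [OpensMeasurableSpace L]
    {m ε : ℝ} (hm : 0 < m) (hε : 0 < ε) (T : C(K, ℝ) →ₗ[ℝ] C(L, ℝ))
    (hT : ∀ g : C(K, ℝ), m * ‖g‖ ≤ ‖T g‖) (ν : L → SignedMeasure K)
    (hν : ∀ (g : C(K, ℝ)) (y : L), sInteg (ν y) g = T g y) (μ : SignedMeasure L)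
    (hHB : vnorm μ ≤ ⨆ g : {g : C(K, ℝ) // ‖T g‖ ≤ 1}, sInteg μ (T (g : C(K, ℝ)))) :
    μ.totalVariation {y | vnorm (ν y) ≤ m - ε} = 0 := by
  set A := {y | vnorm (ν y) ≤ m - ε}
  have hbound : ∀ g : {g : C(K, ℝ) // ‖T g‖ ≤ 1},
      sInteg μ (T g) ≤ vnorm μ - ε / m * μ.totalVariation.real A := by
    rintro ⟨g, hg⟩
    have hg_norm : ‖g‖ ≤ 1 / m := by
      rw [le_div_iff₀ hm]
      linarith [hT g]
    refine sInteg_le_vnorm_sub μ hg (by positivity) fun y hy => ?_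
    calc |T g y| = |sInteg (ν y) g| := by rw [hν]
      _ ≤ ‖g‖ * vnorm (ν y) := abs_sInteg_le g.norm_coe_le_norm
      _ ≤ 1 / m * (m - ε) := mul_le_mul hg_norm hy (vnorm_nonneg _) (by positivity)
      _ = 1 - ε / m := by field_simp
  have : Nonempty {g : C(K, ℝ) // ‖T g‖ ≤ 1} := ⟨⟨0, by simp⟩⟩
  have hA : ε / m * μ.totalVariation.real A ≤ 0 := by
    linarith [hHB.trans (ciSup_le hbound)]
  rw [← measureReal_eq_zero_iff]
  exact le_antisymm (nonpos_of_mul_nonpos_right hA (by positivity)) measureReal_nonneg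

theorem stmt2_general {K L : Type*}
    [TopologicalSpace K] [CompactSpace K] [MeasurableSpace K]
    [TopologicalSpace L] [CompactSpace L] [MeasurableSpace L] [BorelSpace L]
    (m : ℝ) (hm : 0 < m) (T : C(K, ℝ) →ₗ[ℝ] C(L, ℝ))
    (hT : ∀ g : C(K, ℝ), m * ‖g‖ ≤ ‖T g‖ ∧ ‖T g‖ ≤ ‖g‖)
    (ν : L → SignedMeasure K)
    (hν : ∀ (g : C(K, ℝ)) (y : L), sInteg (ν y) g = T g y)
    (μ : SignedMeasure L)
    (hHB : vnorm μ = ⨆ g : {g : C(K, ℝ) // ‖T g‖ ≤ 1}, sInteg μ (T (g : C(K, ℝ)))) :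
    μ.totalVariation {y : L | vnorm (ν y) < m} = 0 :=
  measure_setOf_lt_eq_zero fun _ hε => totalVariation_setOf_vnorm_le_sub_eq_zero hm hε T
    (fun g => (hT g).1) ν hν μ hHB.le

/-- If `μ` is a norm-preserving Hahn-Banach extension of the functional `Tg ↦ g(x)` on
`T[C(K)]`, then `‖ν_y‖ ≥ m` for `μ`-almost all `y ∈ L`. -/
theorem stmt2 {K L : Type*}
    [TopologicalSpace K] [CompactSpace K] [T2Space K] [MeasurableSpace K] [BorelSpace K]
    [TopologicalSpace L] [CompactSpace L] [T2Space L] [MeasurableSpace L] [BorelSpace L]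
    (m : ℝ) (hm : 0 < m) (T : C(K, ℝ) →ₗ[ℝ] C(L, ℝ))
    (hT : ∀ g : C(K, ℝ), m * ‖g‖ ≤ ‖T g‖ ∧ ‖T g‖ ≤ ‖g‖)
    (ν : L → SignedMeasure K) (hνreg : ∀ y, (ν y).totalVariation.Regular)
    (hν : ∀ (g : C(K, ℝ)) (y : L), sInteg (ν y) g = T g y)
    (x : K) (μ : SignedMeasure L) (hμreg : μ.totalVariation.Regular)
    (hμ : ∀ g : C(K, ℝ), sInteg μ (T g) = g x)
    (hHB : vnorm μ = ⨆ g : {g : C(K, ℝ) // ‖T g‖ ≤ 1}, sInteg μ (T (g : C(K, ℝ)))) :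
    μ.totalVariation {y : L | vnorm (ν y) < m} = 0 :=
  stmt2_general m hm T hT ν hν μ hHB
end

section
/- Let X be a topological space, let k be a natural number, and for each j = 1, …, k let f_j = g_j − g'_j where g_j, g'_j : X → ℝ are bounded lower semicontinuous functions. Let U ⊆ X be a nonempty open set and η > 0. Then there is a nonempty open set V ⊆ U such that for every j = 1, …, k the oscillation of f_j on V is at most η, i.e., |f_j(x') − f_j(x'')| ≤ η for all x', x'' ∈ V. -/
/-! Near the supremum `s` of a bounded lower semicontinuous `g` over `U`, the set
`U ∩ {s - ε < g}` is a nonempty open subset of `U` on which `g` oscillates by at most `ε`.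
Shrinking once for each of the finitely many `g j`, `g' j` with `ε = η / 2` controls every
`f j = g j - g' j` at once. -/

open Set

section

variable {X : Type*} [TopologicalSpace X]

theorem exists_isOpen_subset_oscillation_le_of_bddAbove {g : X → ℝ}
    (hlsc : ∀ r : ℝ, IsOpen {x | r < g x}) (hbdd : BddAbove (range g))
    {U : Set X} (hU : IsOpen U) (hUne : U.Nonempty) {ε : ℝ} (hε : 0 < ε) :
    ∃ V ⊆ U, IsOpen V ∧ V.Nonempty ∧ ∀ x ∈ V, ∀ x' ∈ V, |g x - g x'| ≤ ε := by
  have hbddU : BddAbove (g '' U) := hbdd.mono (image_subset_range g U)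
  set s := sSup (g '' U)
  obtain ⟨_, ⟨x₀, hx₀U, rfl⟩, hx₀⟩ :=
    exists_lt_of_lt_csSup (hUne.image g) (sub_lt_self s hε)
  refine ⟨U ∩ {x | s - ε < g x}, inter_subset_left, hU.inter (hlsc _), ⟨x₀, hx₀U, hx₀⟩, ?_⟩
  rintro x ⟨hxU, hx⟩ x' ⟨hx'U, hx'⟩
  have hxs : g x ≤ s := le_csSup hbddU (mem_image_of_mem g hxU)
  have hx's : g x' ≤ s := le_csSup hbddU (mem_image_of_mem g hx'U)
  rw [mem_ofPred_eq] at hx hx'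
  exact abs_sub_le_iff.mpr ⟨by linarith, by linarith⟩

theorem exists_isOpen_subset_forall_mem_finset {ι : Type*} (P : ι → Set X → Prop)
    (hP_anti : ∀ i ⦃V W : Set X⦄, V ⊆ W → P i W → P i V)
    (hP : ∀ i U, IsOpen U → U.Nonempty → ∃ V ⊆ U, IsOpen V ∧ V.Nonempty ∧ P i V)
    (s : Finset ι) {U : Set X} (hU : IsOpen U) (hUne : U.Nonempty) :
    ∃ V ⊆ U, IsOpen V ∧ V.Nonempty ∧ ∀ i ∈ s, P i V := by
  classical
  induction s using Finset.induction_on with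
  | empty => exact ⟨U, subset_rfl, hU, hUne, by simp⟩
  | insert i s _ ih =>
    obtain ⟨W, hWU, hW, hWne, hWs⟩ := ih
    obtain ⟨V, hVW, hV, hVne, hVi⟩ := hP i W hW hWne
    refine ⟨V, hVW.trans hWU, hV, hVne, (Finset.forall_mem_insert _ _ _).mpr ⟨hVi, ?_⟩⟩
    exact fun j hj => hP_anti j hVW (hWs j hj)

end

/-- If `f j = g j - g' j` for bounded lower semicontinuous functions `g j, g' j`, `j = 1,…,k`,
and `U` is nonempty open, then for any `η > 0` there is a nonempty open `V ⊆ U` on which the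
oscillation of every `f j` is at most `η`. -/
theorem stmt9 {X : Type*} [TopologicalSpace X] (k : ℕ) (g g' : Fin k → X → ℝ)
    (hlsc : ∀ j, ∀ r : ℝ, IsOpen {x : X | r < g j x})
    (hlsc' : ∀ j, ∀ r : ℝ, IsOpen {x : X | r < g' j x})
    (hbdd : ∀ j, Bornology.IsBounded (Set.range (g j)))
    (hbdd' : ∀ j, Bornology.IsBounded (Set.range (g' j)))
    (f : Fin k → X → ℝ) (hf : ∀ j x, f j x = g j x - g' j x)
    (U : Set X) (hUopen : IsOpen U) (hUne : U.Nonempty)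
    (η : ℝ) (hη : 0 < η) :
    ∃ V : Set X, IsOpen V ∧ V.Nonempty ∧ V ⊆ U ∧
      ∀ j, ∀ x ∈ V, ∀ x' ∈ V, |f j x - f j x'| ≤ η := by
  let h : Fin k ⊕ Fin k → X → ℝ := Sum.elim g g'
  have hlsc_h : ∀ i, ∀ r : ℝ, IsOpen {x | r < h i x} := Sum.forall.mpr ⟨hlsc, hlsc'⟩
  have hbdd_h : ∀ i, BddAbove (range (h i)) :=
    Sum.forall.mpr ⟨fun j => (hbdd j).bddAbove, fun j => (hbdd' j).bddAbove⟩
  obtain ⟨V, hVU, hV, hVne, hosc⟩ := exists_isOpen_subset_forall_mem_finset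
    (fun i V => ∀ x ∈ V, ∀ x' ∈ V, |h i x - h i x'| ≤ η / 2)
    (fun _ _ _ hVW hW x hx x' hx' => hW x (hVW hx) x' (hVW hx'))
    (fun i _ hU hUne => exists_isOpen_subset_oscillation_le_of_bddAbove (hlsc_h i) (hbdd_h i)
      hU hUne (half_pos hη))
    Finset.univ hUopen hUne
  refine ⟨V, hV, hVne, hVU, fun j x hx x' hx' => ?_⟩
  have hg := hosc (.inl j) (Finset.mem_univ _) x hx x' hx'
  have hg' := hosc (.inr j) (Finset.mem_univ _) x hx x' hx'
  calc |f j x - f j x'| = |(g j x - g j x') - (g' j x - g' j x')| := by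
        rw [hf, hf]; ring_nf
    _ ≤ |g j x - g j x'| + |g' j x - g' j x'| := abs_sub _ _
    _ ≤ η / 2 + η / 2 := add_le_add hg hg'
    _ = η := add_halves η
end

section
/- Let K and L be compact Hausdorff spaces, let T : C(K) → C(L) be a bijective bounded linear map, and for each x ∈ K let μ_x be a regular finite signed Borel measure on L with ∫_L (Tg) dμ_x = g(x) for all g ∈ C(K). Let Y₁ ⊆ Y₂ ⊆ Y₃ = L be closed subsets of L, let η > 0, let x₀ ∈ K, and suppose U ⊆ K is an open neighbourhood of x₀ such that | |μ_x|(Y_j) − |μ_{x₀}|(Y_j) | < η for j = 1, 2, 3 and every x ∈ U. Then there is an open set V with x₀ ∈ V ⊆ U and a compact set L₁ ⊆ Y₂ ∖ Y₁ such that |μ_x|(L₁) > |μ_x|(Y₂ ∖ Y₁) − 4η for every x ∈ V. -/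
open MeasureTheory

/-- The (real-valued) total variation of a signed measure on a set. -/
noncomputable def tvr {X : Type*} [MeasurableSpace X] (μ : SignedMeasure X) (S : Set X) : ℝ :=
  (μ.totalVariation S).toReal

section Helpers

variable {X : Type*} [MeasurableSpace X]

lemma mr_mono (m : Measure X) [IsFiniteMeasure m] {s t : Set X} (h : s ⊆ t) :
    (m s).toReal ≤ (m t).toReal :=
  ENNReal.toReal_mono (measure_ne_top m t) (measure_mono h)

lemma mr_union (m : Measure X) [IsFiniteMeasure m] {s t : Set X} (h : Disjoint s t)
    (ht : MeasurableSet t) : (m (s ∪ t)).toReal = (m s).toReal + (m t).toReal := by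
  rw [measure_union h ht, ENNReal.toReal_add (measure_ne_top m s) (measure_ne_top m t)]

lemma mr_le_add (m : Measure X) [IsFiniteMeasure m] {s t u : Set X} (h : s ⊆ t ∪ u) :
    (m s).toReal ≤ (m t).toReal + (m u).toReal := by
  calc (m s).toReal ≤ (m (t ∪ u)).toReal := mr_mono m h
  _ ≤ (m t).toReal + (m u).toReal := by
      rw [← ENNReal.toReal_add (measure_ne_top m t) (measure_ne_top m u)]
      exact ENNReal.toReal_mono
        (ENNReal.add_ne_top.mpr ⟨measure_ne_top m t, measure_ne_top m u⟩)
        (measure_union_le t u)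

lemma mr_le_add3 (m : Measure X) [IsFiniteMeasure m] {s t u v : Set X} (h : s ⊆ t ∪ u ∪ v) :
    (m s).toReal ≤ (m t).toReal + (m u).toReal + (m v).toReal := by
  calc (m s).toReal ≤ (m (t ∪ u)).toReal + (m v).toReal := mr_le_add m h
  _ ≤ (m t).toReal + (m u).toReal + (m v).toReal := by
      have := mr_le_add m (le_refl (t ∪ u))
      linarith

lemma integ_lower (m : Measure X) [IsFiniteMeasure m] {f : X → ℝ} (hf : Integrable f m)
    {A C : Set X} (hA : MeasurableSet A) (hC : MeasurableSet C)
    (hfA : ∀ x ∈ A, f x = 1) (hfC : ∀ x ∈ C, f x = 0) (hlb : ∀ x, -1 ≤ f x) :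
    (m A).toReal - (m ((A ∪ C)ᶜ)).toReal ≤ ∫ x, f x ∂m := by
  have h1 : Integrable (A.indicator (fun _ => (1:ℝ))) m := (integrable_const 1).indicator hA
  have h2 : Integrable ((A ∪ C)ᶜ.indicator (fun _ => (1:ℝ))) m :=
    (integrable_const 1).indicator (hA.union hC).compl
  have hle : ∀ x, A.indicator (fun _ => (1:ℝ)) x - (A ∪ C)ᶜ.indicator (fun _ => (1:ℝ)) x ≤ f x := by
    intro x
    by_cases hxA : x ∈ A
    · rw [Set.indicator_of_mem hxA, Set.indicator_of_notMem (by simp [hxA]), hfA x hxA]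
      norm_num
    · rw [Set.indicator_of_notMem hxA]
      by_cases hxC : x ∈ C
      · rw [Set.indicator_of_notMem (by simp [hxC]), hfC x hxC]
        norm_num
      · rw [Set.indicator_of_mem (by simp [hxA, hxC])]
        linarith [hlb x]
  have hmain := integral_mono (h1.sub h2) hf hle
  simp only [Pi.sub_apply] at hmain
  rw [integral_sub h1 h2, integral_indicator_const (1:ℝ) hA,
    integral_indicator_const (1:ℝ) (hA.union hC).compl, smul_eq_mul, smul_eq_mul,
    mul_one, mul_one] at hmain
  exact hmain

lemma integ_upper (m : Measure X) [IsFiniteMeasure m] {f : X → ℝ} (hf : Integrable f m)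
    {C : Set X} (hC : MeasurableSet C) (hfC : ∀ x ∈ C, f x = 0) (hub : ∀ x, f x ≤ 1) :
    ∫ x, f x ∂m ≤ (m Cᶜ).toReal := by
  have h2 : Integrable (Cᶜ.indicator (fun _ => (1:ℝ))) m := (integrable_const 1).indicator hC.compl
  have hle : ∀ x, f x ≤ Cᶜ.indicator (fun _ => (1:ℝ)) x := by
    intro x
    by_cases hx : x ∈ C
    · rw [hfC x hx, Set.indicator_of_notMem (by simp [hx])]
    · rw [Set.indicator_of_mem (by simp [hx])]
      exact hub x
  have hmain := integral_mono hf h2 hle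
  rwa [integral_indicator_const (1:ℝ) hC.compl, smul_eq_mul, mul_one] at hmain

lemma tv_finite (s : SignedMeasure X) : IsFiniteMeasure s.totalVariation := by
  unfold SignedMeasure.totalVariation
  infer_instance

lemma tvr_apply (s : SignedMeasure X) (S : Set X) :
    tvr s S = (s.toJordanDecomposition.posPart S).toReal
      + (s.toJordanDecomposition.negPart S).toReal := by
  rw [tvr, SignedMeasure.totalVariation, Measure.add_apply,
    ENNReal.toReal_add (measure_ne_top _ _) (measure_ne_top _ _)]

lemma tvr_union (s : SignedMeasure X) {a b : Set X} (h : Disjoint a b) (hb : MeasurableSet b) :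
    tvr s (a ∪ b) = tvr s a + tvr s b := by
  haveI := tv_finite s
  exact mr_union _ h hb

lemma tvr_mono (s : SignedMeasure X) {a b : Set X} (h : a ⊆ b) : tvr s a ≤ tvr s b := by
  haveI := tv_finite s
  exact mr_mono _ h

end Helpers

/-- Lemma on isomorphisms: for closed sets `Y₁ ⊆ Y₂ ⊆ Y₃ = L` on whose variations the measures
`μ_x` have small oscillation near `x₀`, there is a neighbourhood `V` of `x₀` and a compact
`L₁ ⊆ Y₂ ∖ Y₁` carrying almost all of `|μ_x|(Y₂ ∖ Y₁)` for every `x ∈ V`. -/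
theorem stmt10 {K L : Type*}
    [TopologicalSpace K] [CompactSpace K] [T2Space K]
    [TopologicalSpace L] [CompactSpace L] [T2Space L] [MeasurableSpace L] [BorelSpace L]
    (T : C(K, ℝ) →L[ℝ] C(L, ℝ)) (hTbij : Function.Bijective T)
    (μ : K → SignedMeasure L) (hμreg : ∀ x, (μ x).totalVariation.Regular)
    (hμ : ∀ (x : K) (g : C(K, ℝ)), sInteg (μ x) (T g) = g x)
    (Y₁ Y₂ Y₃ : Set L) (hY₁ : IsClosed Y₁) (hY₂ : IsClosed Y₂) (hY₃ : IsClosed Y₃)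
    (h12 : Y₁ ⊆ Y₂) (h23 : Y₂ ⊆ Y₃) (h3 : Y₃ = Set.univ)
    (η : ℝ) (hη : 0 < η) (x₀ : K) (U : Set K) (hU : IsOpen U) (hx₀ : x₀ ∈ U)
    (hosc : ∀ x ∈ U, |tvr (μ x) Y₁ - tvr (μ x₀) Y₁| < η ∧
      |tvr (μ x) Y₂ - tvr (μ x₀) Y₂| < η ∧ |tvr (μ x) Y₃ - tvr (μ x₀) Y₃| < η) :
    ∃ V : Set K, IsOpen V ∧ x₀ ∈ V ∧ V ⊆ U ∧
      ∃ L₁ : Set L, IsCompact L₁ ∧ L₁ ⊆ Y₂ \ Y₁ ∧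
        ∀ x ∈ V, tvr (μ x) (Y₂ \ Y₁) - 4 * η < tvr (μ x) L₁ := by
  classical
  set j := (μ x₀).toJordanDecomposition with hjdef
  set p := j.posPart with hpdef
  set n := j.negPart with hndef
  set ν := (μ x₀).totalVariation with hνdef
  have hνeq : ν = p + n := rfl
  haveI : IsFiniteMeasure ν := tv_finite (μ x₀)
  haveI hreg : ν.Regular := hμreg x₀
  set ε := η / 4 with hεdef
  have hε : 0 < ε := by positivity
  have hε0 : ENNReal.ofReal ε ≠ 0 := by
    simpa [ENNReal.ofReal_eq_zero, not_le] using hε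
  have hple : ∀ s : Set L, p s ≤ ν s := by
    intro s
    rw [hνeq, Measure.add_apply]
    exact le_self_add
  have hnle : ∀ s : Set L, n s ≤ ν s := by
    intro s
    rw [hνeq, Measure.add_apply]
    exact le_add_self
  -- outer approximation of Y₁
  obtain ⟨M, hY₁M, hMopen, hMlt⟩ := Set.exists_isOpen_lt_add Y₁ (measure_ne_top ν Y₁) hε0
  have hMd : ν (M \ Y₁) < ENNReal.ofReal ε :=
    measure_diff_lt_of_lt_add hY₁.measurableSet.nullMeasurableSet hY₁M (measure_ne_top ν Y₁) hMlt
  obtain ⟨N, hNopen, hY₁N, hclN⟩ := normal_exists_closure_subset hY₁ hMopen hY₁M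
  set C := closure N with hCdef
  have hCclosed : IsClosed C := isClosed_closure
  have hCm : MeasurableSet C := hCclosed.measurableSet
  have hNC : N ⊆ C := subset_closure
  have hY₁C : Y₁ ⊆ C := hY₁N.trans hNC
  have hCd : ν (C \ Y₁) < ENNReal.ofReal ε :=
    lt_of_le_of_lt (measure_mono (Set.diff_subset_diff_left hclN)) hMd
  -- the compact set L₁ and the remainder D
  have hL₁closed : IsClosed (Y₂ \ N) := by
    rw [Set.diff_eq]
    exact hY₂.inter hNopen.isClosed_compl
  have hL₁comp : IsCompact (Y₂ \ N) := hL₁closed.isCompact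
  have hL₁sub : Y₂ \ N ⊆ Y₂ \ Y₁ := Set.diff_subset_diff_right hY₁N
  set D := (Y₂ \ Y₁) ∩ N with hDdef
  have hDm : MeasurableSet D :=
    (hY₂.measurableSet.diff hY₁.measurableSet).inter hNopen.measurableSet
  have hsplit : Y₂ \ Y₁ = (Y₂ \ N) ∪ D := by
    ext z
    simp only [hDdef, Set.mem_union, Set.mem_diff, Set.mem_inter_iff]
    constructor
    · rintro ⟨h2, h1⟩
      by_cases hzN : z ∈ N
      · exact Or.inr ⟨⟨h2, h1⟩, hzN⟩
      · exact Or.inl ⟨h2, hzN⟩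
    · rintro (⟨h2, hzN⟩ | ⟨⟨h2, h1⟩, _⟩)
      · exact ⟨h2, fun h1 => hzN (hY₁N h1)⟩
      · exact ⟨h2, h1⟩
  have hdisj1 : Disjoint (Y₂ \ N) D :=
    Set.disjoint_left.mpr fun z hz hzD => hz.2 hzD.2
  have hDsub : D ⊆ C \ Y₁ := fun z hz => ⟨hNC hz.2, hz.1.2⟩
  have hY₁Ddisj : Disjoint Y₁ D := Set.disjoint_left.mpr fun z hz hzD => hzD.1.2 hz
  have hY₁D_C : Y₁ ∪ D ⊆ C := Set.union_subset hY₁C (hDsub.trans Set.diff_subset)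
  -- Hahn decomposition set
  obtain ⟨S, hSm, hpS, hnS⟩ := j.mutuallySingular
  rw [← hpdef] at hpS
  rw [← hndef] at hnS
  -- inner compact approximations
  obtain ⟨A, hAsub, hAcomp, hAlt⟩ :=
    (hSm.compl.diff hCm).exists_isCompact_lt_add (measure_ne_top ν (Sᶜ \ C)) hε0
  obtain ⟨B, hBsub, hBcomp, hBlt⟩ :=
    (hSm.diff hCm).exists_isCompact_lt_add (measure_ne_top ν (S \ C)) hε0
  have hAm : MeasurableSet A := hAcomp.isClosed.measurableSet
  have hBm : MeasurableSet B := hBcomp.isClosed.measurableSet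
  have hdBCA : Disjoint (B ∪ C) A := by
    refine Set.disjoint_left.mpr ?_
    rintro z (hzB | hzC) hzA
    · exact (hAsub hzA).1 (hBsub hzB).1
    · exact (hAsub hzA).2 hzC
  have hdACB : Disjoint (A ∪ C) B := by
    refine Set.disjoint_left.mpr ?_
    rintro z (hzA | hzC) hzB
    · exact (hAsub hzA).1 (hBsub hzB).1
    · exact (hBsub hzB).2 hzC
  -- Urysohn functions
  obtain ⟨φA, hφA0, hφA1, hφA01⟩ :=
    exists_continuous_zero_one_of_isClosed (hBcomp.isClosed.union hCclosed) hAcomp.isClosed hdBCA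
  obtain ⟨φB, hφB0, hφB1, hφB01⟩ :=
    exists_continuous_zero_one_of_isClosed (hAcomp.isClosed.union hCclosed) hBcomp.isClosed hdACB
  set f : C(L, ℝ) := φA - φB with hfdef
  have hfz : ∀ z, f z = φA z - φB z := fun z => rfl
  have hf_A : ∀ z ∈ A, f z = 1 := by
    intro z hz
    rw [hfz, hφA1 hz, hφB0 (Set.mem_union_left _ hz)]
    norm_num
  have hf_B : ∀ z ∈ B, (-(f z)) = 1 := by
    intro z hz
    rw [hfz, hφB1 hz, hφA0 (Set.mem_union_left _ hz)]
    norm_num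
  have hf_C : ∀ z ∈ C, f z = 0 := by
    intro z hz
    rw [hfz, hφA0 (Set.mem_union_right _ hz), hφB0 (Set.mem_union_right _ hz)]
    norm_num
  have hf_lb : ∀ z, -1 ≤ f z := by
    intro z
    have h1 := (hφA01 z).1
    have h2 := (hφB01 z).2
    rw [hfz]; linarith
  have hf_ub : ∀ z, f z ≤ 1 := by
    intro z
    have h1 := (hφA01 z).2
    have h2 := (hφB01 z).1
    rw [hfz]; linarith
  -- the preimage function g
  obtain ⟨g, hg⟩ := hTbij.2 f
  have hkey : ∀ x, sInteg (μ x) f = g x := by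
    intro x
    rw [← hg]
    exact hμ x g
  -- integrability of f
  have hint : ∀ (m : Measure L) [IsFiniteMeasure m], Integrable (⇑f) m := by
    intro m _
    exact f.continuous.integrable_of_hasCompactSupport
      (IsCompact.of_isClosed_subset isCompact_univ (isClosed_tsupport _) (Set.subset_univ _))
  -- small-set bounds for p and n
  have hof : (ENNReal.ofReal ε).toReal = ε := ENNReal.toReal_ofReal hε.le
  have hsmall : ∀ (m : Measure L), (∀ s, m s ≤ ν s) → ∀ s : Set L,
      ν s < ENNReal.ofReal ε → (m s).toReal ≤ ε := by
    intro m hm s hs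
    exact le_trans (ENNReal.toReal_mono ENNReal.ofReal_ne_top ((hm s).trans hs.le)) hof.le
  -- lower bound for the positive part at x₀
  have hAd : ν ((Sᶜ \ C) \ A) < ENNReal.ofReal ε :=
    measure_diff_lt_of_lt_add hAm.nullMeasurableSet hAsub (measure_ne_top ν A) hAlt
  have hBd : ν ((S \ C) \ B) < ENNReal.ofReal ε :=
    measure_diff_lt_of_lt_add hBm.nullMeasurableSet hBsub (measure_ne_top ν B) hBlt
  have hpA : (p Set.univ).toReal - (p C).toReal - ε ≤ (p A).toReal := by
    have h4 : (p (Sᶜ \ C)).toReal ≤ (p ((Sᶜ \ C) \ A)).toReal + (p A).toReal :=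
      mr_le_add p (Set.subset_diff_union _ _)
    have h3 : (p ((Sᶜ \ C) \ A)).toReal ≤ ε := hsmall p hple _ hAd
    have hb : (p Set.univ).toReal ≤ (p (Sᶜ \ C)).toReal + (p C).toReal + (p S).toReal := by
      refine mr_le_add3 p ?_
      intro z _
      by_cases hzS : z ∈ S
      · exact Or.inr hzS
      · by_cases hzC : z ∈ C
        · exact Or.inl (Or.inr hzC)
        · exact Or.inl (Or.inl ⟨hzS, hzC⟩)
    rw [hpS] at hb
    simp only [ENNReal.toReal_zero] at hb
    linarith
  have hnB : (n Set.univ).toReal - (n C).toReal - ε ≤ (n B).toReal := by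
    have h4 : (n (S \ C)).toReal ≤ (n ((S \ C) \ B)).toReal + (n B).toReal :=
      mr_le_add n (Set.subset_diff_union _ _)
    have h3 : (n ((S \ C) \ B)).toReal ≤ ε := hsmall n hnle _ hBd
    have hb : (n Set.univ).toReal ≤ (n (S \ C)).toReal + (n C).toReal + (n Sᶜ).toReal := by
      refine mr_le_add3 n ?_
      intro z _
      by_cases hzS : z ∈ S
      · by_cases hzC : z ∈ C
        · exact Or.inl (Or.inr hzC)
        · exact Or.inl (Or.inl ⟨hzS, hzC⟩)
      · exact Or.inr hzS
    rw [hnS] at hb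
    simp only [ENNReal.toReal_zero] at hb
    linarith
  have hpC : (p C).toReal ≤ (p Y₁).toReal + ε := by
    have h4 : (p C).toReal ≤ (p (C \ Y₁)).toReal + (p Y₁).toReal :=
      mr_le_add p (Set.subset_diff_union _ _)
    have h3 : (p (C \ Y₁)).toReal ≤ ε := hsmall p hple _ hCd
    linarith
  have hnC : (n C).toReal ≤ (n Y₁).toReal + ε := by
    have h4 : (n C).toReal ≤ (n (C \ Y₁)).toReal + (n Y₁).toReal :=
      mr_le_add n (Set.subset_diff_union _ _)
    have h3 : (n (C \ Y₁)).toReal ≤ ε := hsmall n hnle _ hCd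
    linarith
  -- complement computations
  have hACdisj : Disjoint A C := Set.disjoint_left.mpr fun z hz => (hAsub hz).2
  have hBCdisj : Disjoint B C := Set.disjoint_left.mpr fun z hz => (hBsub hz).2
  have hpcompl : (p ((A ∪ C)ᶜ)).toReal = (p Set.univ).toReal - (p A).toReal - (p C).toReal := by
    have h1 := mr_union p hACdisj hCm
    have h2 : p ((A ∪ C)ᶜ) = p Set.univ - p (A ∪ C) :=
      measure_compl (hAm.union hCm) (measure_ne_top _ _)
    rw [h2, ENNReal.toReal_sub_of_le (measure_mono (Set.subset_univ _)) (measure_ne_top _ _), h1]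
    ring
  have hncompl : (n ((B ∪ C)ᶜ)).toReal = (n Set.univ).toReal - (n B).toReal - (n C).toReal := by
    have h1 := mr_union n hBCdisj hCm
    have h2 : n ((B ∪ C)ᶜ) = n Set.univ - n (B ∪ C) :=
      measure_compl (hBm.union hCm) (measure_ne_top _ _)
    rw [h2, ENNReal.toReal_sub_of_le (measure_mono (Set.subset_univ _)) (measure_ne_top _ _), h1]
    ring
  -- the integral lower bound at x₀
  have hplow := integ_lower p (hint p) hAm hCm hf_A hf_C hf_lb
  have hfnegn : Integrable (fun z => -(f z)) n := (hint n).neg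
  have hnlow := integ_lower n hfnegn hBm hCm hf_B
    (fun z hz => by show -(f z) = 0; rw [hf_C z hz]; norm_num)
    (fun z => by show -1 ≤ -(f z); linarith [hf_ub z])
  have hnegint : ∫ z, -(f z) ∂n = -∫ z, f z ∂n := integral_neg _
  have hx₀bound : tvr (μ x₀) Set.univ - tvr (μ x₀) Y₁ - 6 * ε ≤ sInteg (μ x₀) ⇑f := by
    have e1 : sInteg (μ x₀) ⇑f = ∫ z, f z ∂p - ∫ z, f z ∂n := rfl
    rw [e1, tvr_apply, tvr_apply, ← hjdef, ← hpdef, ← hndef]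
    rw [hnegint] at hnlow
    rw [hpcompl] at hplow
    rw [hncompl] at hnlow
    linarith [hpA, hnB, hpC, hnC]
  -- the neighbourhood V
  set c : ℝ := tvr (μ x₀) Set.univ - tvr (μ x₀) Y₁ - 7 * ε with hcdef
  refine ⟨U ∩ g ⁻¹' Set.Ioi c, hU.inter (isOpen_Ioi.preimage g.continuous), ⟨hx₀, ?_⟩,
    Set.inter_subset_left, Y₂ \ N, hL₁comp, hL₁sub, ?_⟩
  · have := hx₀bound
    rw [hkey x₀] at this
    simp only [Set.mem_preimage, Set.mem_Ioi, hcdef]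
    linarith
  · rintro x ⟨hxU, hxg⟩
    simp only [Set.mem_preimage, Set.mem_Ioi] at hxg
    haveI : IsFiniteMeasure (μ x).toJordanDecomposition.posPart := inferInstance
    haveI : IsFiniteMeasure (μ x).toJordanDecomposition.negPart := inferInstance
    -- upper bound for sInteg (μ x) f
    have hupx := integ_upper (μ x).toJordanDecomposition.posPart
      (hint _) hCm hf_C hf_ub
    have hfnegx : Integrable (fun z => -(f z)) (μ x).toJordanDecomposition.negPart :=
      (hint _).neg
    have hupn := integ_upper (μ x).toJordanDecomposition.negPart
      hfnegx hCm (fun z hz => by show -(f z) = 0; rw [hf_C z hz]; norm_num)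
      (fun z => by show -(f z) ≤ 1; linarith [hf_lb z])
    rw [integral_neg] at hupn
    have hsIle : sInteg (μ x) ⇑f ≤ tvr (μ x) Cᶜ := by
      have e1 : sInteg (μ x) ⇑f = (∫ z, f z ∂(μ x).toJordanDecomposition.posPart)
          - ∫ z, f z ∂(μ x).toJordanDecomposition.negPart := rfl
      rw [e1, tvr_apply]
      linarith
    -- totals
    have h1x : tvr (μ x) Set.univ = tvr (μ x) C + tvr (μ x) Cᶜ := by
      rw [← tvr_union (μ x) disjoint_compl_right hCm.compl, Set.union_compl_self]
    obtain ⟨ho1, _, ho3⟩ := hosc x hxU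
    rw [h3] at ho3
    have ho1' := abs_lt.mp ho1
    have ho3' := abs_lt.mp ho3
    have hxC : tvr (μ x) C < tvr (μ x) Y₁ + 2 * η + 7 * ε := by
      have := hkey x
      rw [this] at hsIle
      linarith [hsIle, h1x, ho1'.1, ho1'.2, ho3'.1, ho3'.2, hxg, hcdef]
    have hxYD : tvr (μ x) Y₁ + tvr (μ x) D ≤ tvr (μ x) C := by
      rw [← tvr_union (μ x) hY₁Ddisj hDm]
      exact tvr_mono (μ x) hY₁D_C
    have hsplitx : tvr (μ x) (Y₂ \ Y₁) = tvr (μ x) (Y₂ \ N) + tvr (μ x) D := by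
      rw [hsplit]
      exact tvr_union (μ x) hdisj1 hDm
    rw [hsplitx]
    have : tvr (μ x) D < 2 * η + 7 * ε := by linarith
    rw [hεdef] at this
    linarith
end

section
/- Let K and L be compact Hausdorff spaces, let T : C(K) → C(L) be a bijective bounded linear map, and for each x ∈ K let μ_x be a regular finite signed Borel measure on L with ∫_L (Tg) dμ_x = g(x) for all g ∈ C(K). Let N ≥ 1, let Z₁ ⊆ Z₂ ⊆ … ⊆ Z_N = L be closed subsets of L, let η > 0, let x₀ ∈ K, and suppose U ⊆ K is an open neighbourhood of x₀ such that | |μ_x|(Z_j) − |μ_{x₀}|(Z_j) | < η for every 1 ≤ j ≤ N and every x ∈ U. Then there are an open set V with x₀ ∈ V ⊆ U and compact sets L_j ⊆ Z_{j+1} ∖ Z_j for 1 ≤ j ≤ N−1 such that |μ_x|(L_j) > |μ_x|(Z_{j+1} ∖ Z_j) − 4η for every x ∈ V and every 1 ≤ j ≤ N−1. -/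
open MeasureTheory

/-!
Fix `j` and put `W = Z_jᶜ`. A Hahn decomposition of `μ_{x₀}` and the regularity of `|μ_{x₀}|`
give disjoint compact sets in `W` carrying almost all of `μ_{x₀}⁺(W)` and of `μ_{x₀}⁻(W)`, and
Urysohn's lemma a continuous `f` with `|f| ≤ 1`, equal to `±1` on them and supported in an open
`O_j` with `closure O_j ⊆ W`; then `∫ f dμ_{x₀} > |μ_{x₀}|(W) - η`. As `∫ f dμ_x = (T⁻¹ f)(x)`
is continuous in `x` and bounded by `|μ_x|(O_j)`, we get `|μ_x|(O_j) > |μ_{x₀}|(Z_jᶜ) - η` for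
`x` near `x₀`. The compact set `L_j = closure O_j ∩ Z_{j+1}` misses only `O_j \ Z_{j+1}` of
`O_j`, and the oscillation bounds at `Z_j` and at `Z_N = L` replace `|μ_{x₀}|(Z_jᶜ)` by
`|μ_x|(Z_jᶜ)` at the cost of `2η`, so `|μ_x|(L_j) > |μ_x|(Z_{j+1} \ Z_j) - 3η`.
-/

open Filter Topology Set

section Integral

variable {X : Type*} [MeasurableSpace X] {μ : Measure X} [IsFiniteMeasure μ] {f : X → ℝ}

lemma integral_le_measureReal_of_le_indicator (hf : Integrable f μ) {s : Set X}
    (hs : MeasurableSet s) (h : ∀ x, f x ≤ s.indicator 1 x) : ∫ x, f x ∂μ ≤ μ.real s := by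
  rw [← integral_indicator_one hs]
  exact integral_mono hf ((integrable_const 1).indicator hs) h

lemma measureReal_sub_integral_le (hf : Integrable f μ) {C W : Set X} (hC : MeasurableSet C)
    (hW : MeasurableSet W) (hf_ge : ∀ x, -1 ≤ f x) (hfC : EqOn f 1 C) (hfW : ∀ x ∉ W, f x = 0) :
    μ.real W - ∫ x, f x ∂μ ≤ 2 * μ.real (W \ C) := by
  have hpt : ∀ x, W.indicator 1 x - f x ≤ 2 * (W \ C).indicator 1 x := by
    intro x
    by_cases hxW : x ∈ W
    · by_cases hxC : x ∈ C
      · simp [hxW, hxC, hfC hxC]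
      · rw [indicator_of_mem hxW, indicator_of_mem (mem_sdiff_of_mem hxW hxC)]
        change 1 - f x ≤ 2 * 1
        linarith [hf_ge x]
    · simp [hxW, hfW x hxW]
  have hW1 : Integrable (W.indicator (1 : X → ℝ)) μ := (integrable_const 1).indicator hW
  have hWC1 : Integrable ((W \ C).indicator (1 : X → ℝ)) μ :=
    (integrable_const 1).indicator (hW.diff hC)
  have hmono := integral_mono (f := fun x => W.indicator 1 x - f x) (hW1.sub hf)
    (hWC1.const_mul 2) hpt
  rwa [integral_sub hW1 hf, integral_const_mul,
    integral_indicator_one hW, integral_indicator_one (hW.diff hC)] at hmono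

end Integral

lemma exists_isCompact_subset_sdiff_measure_sdiff_lt {X : Type*} [MeasurableSpace X]
    [TopologicalSpace X] [OpensMeasurableSpace X] [T2Space X] {μ ν : Measure X}
    [IsFiniteMeasure ν] [ν.InnerRegularCompactLTTop] (hμν : μ ≤ ν) {S A : Set X}
    (hS : MeasurableSet S) (hμS : μ S = 0) (hA : MeasurableSet A) {ε : ENNReal} (hε : ε ≠ 0) :
    ∃ C ⊆ A \ S, IsCompact C ∧ μ (A \ C) < ε := by
  obtain ⟨C, hCA, hC, hνC⟩ := (hA.diff hS).exists_isCompact_sdiff_lt (measure_ne_top ν _) hε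
  refine ⟨C, hCA, hC, lt_of_le_of_lt ?_ hνC⟩
  calc μ (A \ C) ≤ μ ((A \ S) \ C ∪ S) := measure_mono fun x ⟨hxA, hxC⟩ => by
          by_cases hxS : x ∈ S
          exacts [Or.inr hxS, Or.inl ⟨⟨hxA, hxS⟩, hxC⟩]
    _ ≤ μ ((A \ S) \ C) + μ S := measure_union_le _ _
    _ = μ ((A \ S) \ C) := by rw [hμS, add_zero]
    _ ≤ ν ((A \ S) \ C) := hμν _

lemma exists_continuous_one_neg_one_of_isClosed {X : Type*} [TopologicalSpace X] [NormalSpace X]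
    {A B O : Set X} (hA : IsClosed A) (hB : IsClosed B) (hAB : Disjoint A B) (hO : IsOpen O)
    (hAO : A ⊆ O) (hBO : B ⊆ O) :
    ∃ f : C(X, ℝ), (∀ x, |f x| ≤ 1) ∧ EqOn f 1 A ∧ EqOn f (-1) B ∧ ∀ x ∉ O, f x = 0 := by
  obtain ⟨u, hu0, hu1, hu⟩ := exists_continuous_zero_one_of_isClosed
    (hB.union hO.isClosed_compl) hA (disjoint_union_left.2
      ⟨hAB.symm, disjoint_compl_left_iff_subset.2 hAO⟩)
  obtain ⟨v, hv0, hv1, hv⟩ := exists_continuous_zero_one_of_isClosed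
    (hA.union hO.isClosed_compl) hB (disjoint_union_left.2
      ⟨hAB, disjoint_compl_left_iff_subset.2 hBO⟩)
  refine ⟨u - v, fun x => ?_, fun x hx => ?_, fun x hx => ?_, fun x hx => ?_⟩
  · obtain ⟨hux₀, hux₁⟩ := hu x
    obtain ⟨hvx₀, hvx₁⟩ := hv x
    rw [ContinuousMap.sub_apply, abs_le]
    constructor <;> linarith
  · simp [hu1 hx, hv0 (Or.inl hx)]
  · simp [hu0 (Or.inl hx), hv1 hx]
  · simp [hu0 (Or.inr hx), hv0 (Or.inr hx)]

section SignedMeasure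

variable {L : Type*} [MeasurableSpace L]

lemma tvr_eq_posPart_add_negPart (ν : SignedMeasure L) (s : Set L) :
    tvr ν s = ν.toJordanDecomposition.posPart.real s + ν.toJordanDecomposition.negPart.real s :=
  measureReal_add_apply

variable [TopologicalSpace L]

lemma continuous_sInteg_of_surjective {K : Type*} [TopologicalSpace K] (T : C(K, ℝ) → C(L, ℝ))
    (hT : Function.Surjective T) (μ : K → SignedMeasure L)
    (hμ : ∀ (x : K) (g : C(K, ℝ)), sInteg (μ x) (T g) = g x) (f : C(L, ℝ)) :
    Continuous fun x => sInteg (μ x) f := by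
  obtain ⟨g, rfl⟩ := hT f
  simpa only [hμ] using g.continuous

variable [CompactSpace L] [OpensMeasurableSpace L]

lemma ContinuousMap.integrable_of_compactSpace (μ : Measure L) [IsFiniteMeasure μ]
    (f : C(L, ℝ)) : Integrable f μ :=
  f.continuous.integrable_of_hasCompactSupport (HasCompactSupport.of_compactSpace _)

lemma sInteg_le_tvr (ν : SignedMeasure L) (f : C(L, ℝ)) {O : Set L} (hO : MeasurableSet O)
    (hf : ∀ y, |f y| ≤ 1) (hfO : ∀ y ∉ O, f y = 0) : sInteg ν f ≤ tvr ν O := by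
  have hle : ∀ g : C(L, ℝ), (∀ y, g y ≤ 1) → (∀ y ∉ O, g y = 0) → ∀ y, g y ≤ O.indicator 1 y :=
    fun g h1 h0 y => by
      by_cases hy : y ∈ O
      · simpa [hy] using h1 y
      · simp [hy, h0 y hy]
  have hpos := integral_le_measureReal_of_le_indicator
    (ContinuousMap.integrable_of_compactSpace ν.toJordanDecomposition.posPart f) hO
    (hle f (fun y => (abs_le.1 (hf y)).2) hfO)
  have hneg := integral_le_measureReal_of_le_indicator
    (ContinuousMap.integrable_of_compactSpace ν.toJordanDecomposition.negPart (-f)) hO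
    (hle (-f) (fun y => by rw [ContinuousMap.neg_apply]; linarith [(abs_le.1 (hf y)).1])
      (fun y hy => by simp [hfO y hy]))
  simp only [ContinuousMap.neg_apply, integral_neg] at hneg
  rw [sInteg, tvr_eq_posPart_add_negPart]
  linarith

lemma exists_continuous_tvr_sub_lt_sInteg [T2Space L] (ν : SignedMeasure L)
    [ν.totalVariation.Regular] {W : Set L} (hW : IsOpen W) {ε : ℝ} (hε : 0 < ε) :
    ∃ O : Set L, IsOpen O ∧ closure O ⊆ W ∧ ∃ f : C(L, ℝ),
      (∀ y, |f y| ≤ 1) ∧ (∀ y ∉ O, f y = 0) ∧ tvr ν W - ε < sInteg ν f := by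
  set p := ν.toJordanDecomposition.posPart
  set n := ν.toJordanDecomposition.negPart
  obtain ⟨S, hS, hpS, hnS⟩ := ν.toJordanDecomposition.mutuallySingular
  have hε' : ENNReal.ofReal (ε / 4) ≠ 0 := (ENNReal.ofReal_pos.2 (by positivity)).ne'
  obtain ⟨Cp, hCpW, hCp, hpCp⟩ := exists_isCompact_subset_sdiff_measure_sdiff_lt
    (ν := ν.totalVariation) (Measure.le_add_right le_rfl) hS hpS hW.measurableSet hε'
  obtain ⟨Cn, hCnW, hCn, hnCn⟩ := exists_isCompact_subset_sdiff_measure_sdiff_lt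
    (ν := ν.totalVariation) (Measure.le_add_left le_rfl) hS.compl hnS hW.measurableSet hε'
  have hCpn : Disjoint Cp Cn := disjoint_left.2 fun y hyp hyn =>
    (hCpW hyp).2 (by simpa using (hCnW hyn).2)
  obtain ⟨O, hO, hCO, hOW⟩ := normal_exists_closure_subset (hCp.union hCn).isClosed hW
    (union_subset (fun y hy => (hCpW hy).1) fun y hy => (hCnW hy).1)
  obtain ⟨f, hf, hfp, hfn, hfO⟩ := exists_continuous_one_neg_one_of_isClosed hCp.isClosed
    hCn.isClosed hCpn hO (subset_union_left.trans hCO) (subset_union_right.trans hCO)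
  have hfW : ∀ y ∉ W, f y = 0 := fun y hy => hfO y fun hyO => hy (hOW (subset_closure hyO))
  refine ⟨O, hO, hOW, f, hf, hfO, ?_⟩
  have hpos := measureReal_sub_integral_le (ContinuousMap.integrable_of_compactSpace p f)
    hCp.measurableSet hW.measurableSet (fun y => (abs_le.1 (hf y)).1) hfp hfW
  have hneg := measureReal_sub_integral_le (ContinuousMap.integrable_of_compactSpace n (-f))
    hCn.measurableSet hW.measurableSet (fun y => by simpa using (abs_le.1 (hf y)).2)
    (fun y hy => by simp [hfn hy]) (fun y hy => by simp [hfW y hy])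
  simp only [ContinuousMap.neg_apply, integral_neg] at hneg
  have hpW : p.real (W \ Cp) < ε / 4 := ENNReal.toReal_lt_of_lt_ofReal hpCp
  have hnW : n.real (W \ Cn) < ε / 4 := ENNReal.toReal_lt_of_lt_ofReal hnCn
  rw [sInteg, tvr_eq_posPart_add_negPart]
  linarith

lemma exists_isOpen_closure_subset_eventually_lt_tvr [T2Space L] {K : Type*}
    [TopologicalSpace K] {μ : K → SignedMeasure L}
    (hμ : ∀ f : C(L, ℝ), Continuous fun x => sInteg (μ x) f) {x₀ : K}
    (hreg : (μ x₀).totalVariation.Regular) {W : Set L} (hW : IsOpen W) {ε : ℝ} (hε : 0 < ε) :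
    ∃ O : Set L, IsOpen O ∧ closure O ⊆ W ∧ ∀ᶠ x in 𝓝 x₀, tvr (μ x₀) W - ε < tvr (μ x) O := by
  obtain ⟨O, hO, hOW, f, hf, hfO, hlt⟩ := exists_continuous_tvr_sub_lt_sInteg (μ x₀) hW hε
  refine ⟨O, hO, hOW, ?_⟩
  filter_upwards [continuousAt_const.eventually_lt (hμ f).continuousAt hlt] with x hx
  exact hx.trans_le (sInteg_le_tvr (μ x) f hO.measurableSet hf hfO)

end SignedMeasure

lemma measureReal_sdiff_sub_measureReal_inter_le {X : Type*} [MeasurableSpace X]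
    (μ : Measure X) [IsFiniteMeasure μ] {A B : Set X} (hAB : A ⊆ B) (hA : MeasurableSet A)
    (hB : MeasurableSet B) (O : Set X) :
    μ.real (B \ A) - μ.real (O ∩ B) ≤ μ.real univ - μ.real A - μ.real O := by
  have hO := measureReal_inter_add_sdiff (μ := μ) (s := O) hB
  have hOB : μ.real (O \ B) ≤ μ.real Bᶜ := measureReal_mono fun y hy => hy.2
  rw [measureReal_sdiff hAB hA, measureReal_compl hB] at *
  linarith

theorem stmt11_general {K L : Type*}
    [TopologicalSpace K]
    [TopologicalSpace L] [CompactSpace L] [T2Space L] [MeasurableSpace L] [BorelSpace L]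
    (T : C(K, ℝ) →L[ℝ] C(L, ℝ)) (hTbij : Function.Bijective T)
    (μ : K → SignedMeasure L) (hμreg : ∀ x, (μ x).totalVariation.Regular)
    (hμ : ∀ (x : K) (g : C(K, ℝ)), sInteg (μ x) (T g) = g x)
    (N : ℕ) (Z : ℕ → Set L)
    (hZclosed : ∀ j, 1 ≤ j → j ≤ N → IsClosed (Z j))
    (hZmono : ∀ j, 1 ≤ j → j < N → Z j ⊆ Z (j + 1))
    (hZN : Z N = Set.univ)
    (η : ℝ) (hη : 0 < η) (x₀ : K) (U : Set K) (hU : IsOpen U) (hx₀ : x₀ ∈ U)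
    (hosc : ∀ x ∈ U, ∀ j, 1 ≤ j → j ≤ N → |tvr (μ x) (Z j) - tvr (μ x₀) (Z j)| < η) :
    ∃ V : Set K, IsOpen V ∧ x₀ ∈ V ∧ V ⊆ U ∧
      ∃ Ls : ℕ → Set L, ∀ j, 1 ≤ j → j ≤ N - 1 →
        IsCompact (Ls j) ∧ Ls j ⊆ Z (j + 1) \ Z j ∧
          ∀ x ∈ V, tvr (μ x) (Z (j + 1) \ Z j) - 4 * η < tvr (μ x) (Ls j) := by
  choose O hO hOZ hOev using fun j => exists_isOpen_closure_subset_eventually_lt_tvr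
    (continuous_sInteg_of_surjective T hTbij.2 μ hμ) (hμreg x₀) isClosed_closure.isOpen_compl
    (W := (closure (Z j))ᶜ) hη
  obtain ⟨V, hVgood, hV, hx₀V⟩ := eventually_nhds_iff.1 <| (hU.eventually_mem hx₀).and <|
    (eventually_all_finset (Finset.Icc 1 (N - 1))).2 fun j _ => hOev j
  refine ⟨V, hV, hx₀V, fun x hx => (hVgood x hx).1, fun j => closure (O j) ∩ Z (j + 1),
    fun j hj1 hjN => ?_⟩
  have hZj := hZclosed j hj1 (by omega)
  have hZj' := hZclosed (j + 1) (by omega) (by omega)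
  have hOZj : closure (O j) ⊆ (Z j)ᶜ := hZj.closure_eq ▸ hOZ j
  refine ⟨(isClosed_closure.inter hZj').isCompact, fun y hy => ⟨hy.2, hOZj hy.1⟩,
    fun x hx => ?_⟩
  obtain ⟨hxU, hxO⟩ := hVgood x hx
  have hlt := hxO j (Finset.mem_Icc.2 ⟨hj1, hjN⟩)
  rw [hZj.closure_eq] at hlt
  have hsplit : tvr (μ x) (Z (j + 1) \ Z j) - tvr (μ x) (O j ∩ Z (j + 1))
      ≤ tvr (μ x) univ - tvr (μ x) (Z j) - tvr (μ x) (O j) :=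
    measureReal_sdiff_sub_measureReal_inter_le _ (hZmono j hj1 (by omega)) hZj.measurableSet
      hZj'.measurableSet _
  have hclosure : tvr (μ x) (O j ∩ Z (j + 1)) ≤ tvr (μ x) (closure (O j) ∩ Z (j + 1)) :=
    measureReal_mono (inter_subset_inter_left _ subset_closure)
  have hcompl : tvr (μ x₀) (Z j)ᶜ = tvr (μ x₀) univ - tvr (μ x₀) (Z j) :=
    measureReal_compl hZj.measurableSet
  have hoscN := abs_lt.1 (hosc x hxU N (by omega) le_rfl)
  have hoscj := abs_lt.1 (hosc x hxU j hj1 (by omega))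
  rw [hZN] at hoscN
  linarith

/-- Lemma on isomorphisms, iterated version: for closed sets `Z₁ ⊆ … ⊆ Z_N = L` on whose
variations the measures `μ_x` have small oscillation near `x₀`, there exist a neighbourhood
`V` of `x₀` and compact sets `L_j ⊆ Z_{j+1} ∖ Z_j` carrying almost all of
`|μ_x|(Z_{j+1} ∖ Z_j)` for every `x ∈ V`. -/
theorem stmt11 {K L : Type*}
    [TopologicalSpace K] [CompactSpace K] [T2Space K]
    [TopologicalSpace L] [CompactSpace L] [T2Space L] [MeasurableSpace L] [BorelSpace L]
    (T : C(K, ℝ) →L[ℝ] C(L, ℝ)) (hTbij : Function.Bijective T)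
    (μ : K → SignedMeasure L) (hμreg : ∀ x, (μ x).totalVariation.Regular)
    (hμ : ∀ (x : K) (g : C(K, ℝ)), sInteg (μ x) (T g) = g x)
    (N : ℕ) (hN : 1 ≤ N) (Z : ℕ → Set L)
    (hZclosed : ∀ j, 1 ≤ j → j ≤ N → IsClosed (Z j))
    (hZmono : ∀ j, 1 ≤ j → j < N → Z j ⊆ Z (j + 1))
    (hZN : Z N = Set.univ)
    (η : ℝ) (hη : 0 < η) (x₀ : K) (U : Set K) (hU : IsOpen U) (hx₀ : x₀ ∈ U)
    (hosc : ∀ x ∈ U, ∀ j, 1 ≤ j → j ≤ N → |tvr (μ x) (Z j) - tvr (μ x₀) (Z j)| < η) :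
    ∃ V : Set K, IsOpen V ∧ x₀ ∈ V ∧ V ⊆ U ∧
      ∃ Ls : ℕ → Set L, ∀ j, 1 ≤ j → j ≤ N - 1 →
        IsCompact (Ls j) ∧ Ls j ⊆ Z (j + 1) \ Z j ∧
          ∀ x ∈ V, tvr (μ x) (Z (j + 1) \ Z j) - 4 * η < tvr (μ x) (Ls j) :=
  stmt11_general T hTbij μ hμreg hμ N Z hZclosed hZmono hZN η hη x₀ U hU hx₀ hosc
end
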